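/- arXiv:1701.05530 — 3 statements merged into one kernel-verified Lean document; each statement's English description precedes it below -/
import Mathlib

section
/- Let Ξ = (ξ_{ij})_{i≠j, i,j∈{1,…,n}} (n ≥ 4) be a family of real random variables with all second moments finite that is jointly exchangeable, i.e. for every permutation π of {1,…,n} the array (ξ_{π(i)π(j)})_{i≠j} has the same joint distribution as (ξ_{ij})_{i≠j}. Then the covariance matrix of Ξ contains at most six unique values: there exist constants σ², φ_a, φ_b, φ_c, φ_d, φ_e such that for all distinct i, j: Var(ξ_{ij}) = σ² and Cov(ξ_{ij}, ξ_{ji}) = φ_a; for all distinct i, j, k: Cov(ξ_{ij}, ξ_{kj}) = φ_b, Cov(ξ_{ij}, ξ_{ik}) = φ_c, and Cov(ξ_{ij}, ξ_{ki}) = Cov(ξ_{ij}, ξ_{jk}) = φ_d; and for all distinct i, j, k, l: Cov(ξ_{ij}, ξ_{kl}) = φ_e. -/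
open MeasureTheory ProbabilityTheory Filter
open scoped BigOperators Topology ENNReal NNReal

/-- Covariance of two real random variables (w.r.t. the ambient volume measure). -/
noncomputable def cov {Ω : Type} [MeasureSpace Ω] (X Y : Ω → ℝ) : ℝ :=
  ∫ ω, (X ω - ∫ ω', X ω') * (Y ω - ∫ ω', Y ω')

/-!
A joint relabeling `π` leaves the law of the whole array unchanged, and the covariance of two
entries is a functional of that law alone, so `cov (ξ (π i) (π j)) (ξ (π k) (π l)) =
cov (ξ i j) (ξ k l)`. Since permutations act transitively on injective tuples, every
covariance therefore depends only on the equality pattern of its four indices. Up to symmetry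
of `cov` there are six such patterns for pairs of off-diagonal entries, one for each constant.
-/

lemma cov_comm {Ω : Type} [MeasureSpace Ω] (X Y : Ω → ℝ) : cov X Y = cov Y X :=
  covariance_comm X Y

lemma Matrix.injective_vecCons_three {α : Type*} {x y z : α} (hxy : x ≠ y) (hxz : x ≠ z)
    (hyz : y ≠ z) : (![x, y, z]).Injective := by
  simp only [Matrix.vecCons, Fin.cons_injective_iff]
  simp [hxy, hxz, hyz, Function.Injective, eq_iff_true_of_subsingleton]

lemma Matrix.injective_vecCons_four {α : Type*} {x y z w : α} (hxy : x ≠ y) (hxz : x ≠ z)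
    (hxw : x ≠ w) (hyz : y ≠ z) (hyw : y ≠ w) (hzw : z ≠ w) :
    (![x, y, z, w]).Injective := by
  simp only [Matrix.vecCons, Fin.cons_injective_iff]
  simp [hxy, hxz, hxw, hyz, hyw, hzw, Function.Injective, eq_iff_true_of_subsingleton]

namespace ProbabilityTheory

lemma covariance_comp_eq_of_map_eq {Ω E : Type*} [MeasurableSpace Ω] [MeasurableSpace E]
    {μ : Measure Ω} {Z Z' : Ω → E} (hZ : AEMeasurable Z μ) (hZ' : AEMeasurable Z' μ)
    (h : μ.map Z = μ.map Z') {f g : E → ℝ} (hf : Measurable f) (hg : Measurable g) :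
    cov[f ∘ Z, g ∘ Z; μ] = cov[f ∘ Z', g ∘ Z'; μ] := by
  rw [← covariance_map hf.aestronglyMeasurable hg.aestronglyMeasurable hZ, h,
    covariance_map (h ▸ hf.aestronglyMeasurable) (h ▸ hg.aestronglyMeasurable) hZ']

end ProbabilityTheory

section Exchangeable

variable {α : Type*} {Ω : Type} [MeasureSpace Ω]

def IsJointlyExchangeable (ξ : α → α → Ω → ℝ) : Prop :=
  ∀ π : Equiv.Perm α,
    volume.map (fun ω (q : {q : α × α // q.1 ≠ q.2}) => ξ (π q.1.1) (π q.1.2) ω)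
      = volume.map (fun ω (q : {q : α × α // q.1 ≠ q.2}) => ξ q.1.1 q.1.2 ω)

variable {ξ : α → α → Ω → ℝ}

lemma IsJointlyExchangeable.cov_perm (hξ : IsJointlyExchangeable ξ)
    (hmeas : ∀ i j, i ≠ j → Measurable (ξ i j)) (π : Equiv.Perm α) {i j k l : α}
    (hij : i ≠ j) (hkl : k ≠ l) :
    cov (ξ (π i) (π j)) (ξ (π k) (π l)) = cov (ξ i j) (ξ k l) := by
  have harray (σ : Equiv.Perm α) :
      Measurable fun ω (q : {q : α × α // q.1 ≠ q.2}) => ξ (σ q.1.1) (σ q.1.2) ω :=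
    measurable_pi_lambda _ fun q => hmeas _ _ (σ.injective.ne q.2)
  exact covariance_comp_eq_of_map_eq (harray π).aemeasurable (harray 1).aemeasurable (hξ π)
    (measurable_pi_apply ⟨(i, j), hij⟩) (measurable_pi_apply ⟨(k, l), hkl⟩)

lemma IsJointlyExchangeable.cov_eq_of_injective (hξ : IsJointlyExchangeable ξ)
    (hmeas : ∀ i j, i ≠ j → Measurable (ξ i j)) {ι : Type*} [Finite ι] {f g : ι → α}
    (hf : f.Injective) (hg : g.Injective) {a b c d : ι} (hab : a ≠ b) (hcd : c ≠ d) :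
    cov (ξ (g a) (g b)) (ξ (g c) (g d)) = cov (ξ (f a) (f b)) (ξ (f c) (f d)) := by
  obtain ⟨π, hπ⟩ := Equiv.Perm.exists_extending_pair f g hf hg
  simp only [← hπ]
  exact hξ.cov_perm hmeas π (hf.ne hab) (hf.ne hcd)

end Exchangeable

theorem exchangeable_cov_six_values_general {Ω : Type} [MeasureSpace Ω]
    (n : ℕ) (hn : 4 ≤ n) (ξ : Fin n → Fin n → Ω → ℝ)
    (hmeas : ∀ i j, Measurable (ξ i j))
    (hexch : ∀ π : Equiv.Perm (Fin n),
      Measure.map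
          (fun ω => fun q : {q : Fin n × Fin n // q.1 ≠ q.2} => ξ (π q.1.1) (π q.1.2) ω)
          volume
        = Measure.map
          (fun ω => fun q : {q : Fin n × Fin n // q.1 ≠ q.2} => ξ q.1.1 q.1.2 ω)
          volume) :
    ∃ σ2 φa φb φc φd φe : ℝ,
      (∀ i j, i ≠ j → cov (ξ i j) (ξ i j) = σ2 ∧ cov (ξ i j) (ξ j i) = φa) ∧
      (∀ i j k, i ≠ j → i ≠ k → j ≠ k →
        cov (ξ i j) (ξ k j) = φb ∧ cov (ξ i j) (ξ i k) = φc ∧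
        cov (ξ i j) (ξ k i) = φd ∧ cov (ξ i j) (ξ j k) = φd) ∧
      (∀ i j k l, i ≠ j → i ≠ k → i ≠ l → j ≠ k → j ≠ l → k ≠ l →
        cov (ξ i j) (ξ k l) = φe) := by
  let e : Fin 4 → Fin n := Fin.castLE hn
  -- `e (Fin.castLE hm a)` unfolds to `e a`, so `pattern` matches the constants below.
  have pattern {m : ℕ} (hm : m ≤ 4) {f : Fin m → Fin n} (hf : f.Injective) (a b c d : Fin m)
      (hab : a ≠ b) (hcd : c ≠ d) :
      cov (ξ (f a) (f b)) (ξ (f c) (f d))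
        = cov (ξ (e (Fin.castLE hm a)) (e (Fin.castLE hm b)))
            (ξ (e (Fin.castLE hm c)) (e (Fin.castLE hm d))) :=
    IsJointlyExchangeable.cov_eq_of_injective hexch (fun i j _ => hmeas i j)
      ((Fin.castLE_injective hn).comp (Fin.castLE_injective hm)) hf hab hcd
  refine ⟨cov (ξ (e 0) (e 1)) (ξ (e 0) (e 1)), cov (ξ (e 0) (e 1)) (ξ (e 1) (e 0)),
    cov (ξ (e 0) (e 1)) (ξ (e 2) (e 1)), cov (ξ (e 0) (e 1)) (ξ (e 0) (e 2)),
    cov (ξ (e 0) (e 1)) (ξ (e 2) (e 0)), cov (ξ (e 0) (e 1)) (ξ (e 2) (e 3)), ?_, ?_, ?_⟩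
  · intro i j hij
    have hf : (![i, j]).Injective := by simp [hij]
    exact ⟨pattern (by norm_num) hf 0 1 0 1 (by decide) (by decide),
      pattern (by norm_num) hf 0 1 1 0 (by decide) (by decide)⟩
  · intro i j k hij hik hjk
    have hf := Matrix.injective_vecCons_three hij hik hjk
    refine ⟨pattern (by norm_num) hf 0 1 2 1 (by decide) (by decide),
      pattern (by norm_num) hf 0 1 0 2 (by decide) (by decide),
      pattern (by norm_num) hf 0 1 2 0 (by decide) (by decide), ?_⟩
    rw [cov_comm]
    exact pattern (by norm_num) (Matrix.injective_vecCons_three hjk hij.symm hik.symm) 0 1 2 0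
      (by decide) (by decide)
  · intro i j k l hij hik hil hjk hjl hkl
    exact pattern le_rfl (Matrix.injective_vecCons_four hij hik hil hjk hjl hkl) 0 1 2 3
      (by decide) (by decide)

/-- If a family `(ξ i j)_{i ≠ j}` of real random variables on `n ≥ 4` actors with finite
second moments is jointly exchangeable (its joint law, as a random point of
`ℝ^{ordered dyads}`, is invariant under simultaneous relabeling of rows and columns by any
permutation), then its covariance matrix contains at most six unique values. -/
theorem exchangeable_cov_six_values {Ω : Type} [MeasureSpace Ω]
    [IsProbabilityMeasure (volume : Measure Ω)]
    (n : ℕ) (hn : 4 ≤ n) (ξ : Fin n → Fin n → Ω → ℝ)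
    (hmeas : ∀ i j, Measurable (ξ i j))
    (hL2 : ∀ i j, i ≠ j → MemLp (ξ i j) 2 volume)
    (hexch : ∀ π : Equiv.Perm (Fin n),
      Measure.map
          (fun ω => fun q : {q : Fin n × Fin n // q.1 ≠ q.2} => ξ (π q.1.1) (π q.1.2) ω)
          volume
        = Measure.map
          (fun ω => fun q : {q : Fin n × Fin n // q.1 ≠ q.2} => ξ q.1.1 q.1.2 ω)
          volume) :
    ∃ σ2 φa φb φc φd φe : ℝ,
      (∀ i j, i ≠ j → cov (ξ i j) (ξ i j) = σ2 ∧ cov (ξ i j) (ξ j i) = φa) ∧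
      (∀ i j k, i ≠ j → i ≠ k → j ≠ k →
        cov (ξ i j) (ξ k j) = φb ∧ cov (ξ i j) (ξ i k) = φc ∧
        cov (ξ i j) (ξ k i) = φd ∧ cov (ξ i j) (ξ j k) = φd) ∧
      (∀ i j k l, i ≠ j → i ≠ k → i ≠ l → j ≠ k → j ≠ l → k ≠ l →
        cov (ξ i j) (ξ k l) = φe) :=
  exchangeable_cov_six_values_general n hn ξ hmeas hexch
end

section
/- Let n ≥ 2and let e ∈ ℝ^{n(n−1)} be any vector indexed by the ordered dyads among n actors. Let S be the n(n−1) × n(n−1) matrix with S_{(i,j),(k,l)} = 1 if {i,j} ∩ {k,l} ≠ ∅ and 0 otherwise. Then the Hadamard product (e e^T) ∘ S has rank at most n(n−1)/2; in particular, the dyadic clustering covariance matrix estimate (e e^T) ∘ S is singular. -/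
open MeasureTheory ProbabilityTheory Filter
open scoped BigOperators

/-- The type of ordered dyads among `n` actors. -/
abbrev Dyad (n : ℕ) := {p : Fin n × Fin n // p.1 ≠ p.2}

/-- The `n(n-1) × n(n-1)` overlap indicator matrix `S`, with entry `1` whenever the two
ordered dyads share an actor and `0` otherwise. -/
def overlapMatrix (n : ℕ) : Matrix (Dyad n) (Dyad n) ℝ :=
  Matrix.of fun d e =>
    if d.1.1 = e.1.1 ∨ d.1.1 = e.1.2 ∨ d.1.2 = e.1.1 ∨ d.1.2 = e.1.2 then 1 else 0

/-!
Writing `D = diagonal e`, the estimate is `(e eᵀ) ∘ S = D S D`, so its rank is at most that of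
`S`. The row of `S` at the ordered dyad `(i, j)` depends only on the unordered pair `{i, j}`, so
`S` is a row-and-column selection of a matrix indexed by the `n.choose 2` unordered pairs. Since
`n(n-1)/2 < n(n-1)` once `n ≥ 2`, the rank falls short of the size and the determinant vanishes.
-/

open scoped Matrix

namespace Matrix

variable {m n R : Type*} [Fintype m] [Fintype n]

theorem vecMulVec_hadamard [CommSemiring R] [DecidableEq m] [DecidableEq n]
    (u : m → R) (v : n → R) (A : Matrix m n R) :
    vecMulVec u v ⊙ A = diagonal u * A * diagonal v := by
  ext i j
  simp only [hadamard_apply, vecMulVec_apply, mul_diagonal, diagonal_mul]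
  ring

theorem rank_vecMulVec_hadamard_le [CommSemiring R] [StrongRankCondition R]
    (u : m → R) (v : n → R) (A : Matrix m n R) : (vecMulVec u v ⊙ A).rank ≤ A.rank := by
  classical
  rw [vecMulVec_hadamard]
  exact (rank_mul_le_left _ _).trans (rank_mul_le_right _ _)

theorem det_eq_zero_of_rank_lt [Field R] [DecidableEq n] {A : Matrix n n R}
    (h : A.rank < Fintype.card n) : A.det = 0 := by
  by_contra hA
  exact h.ne (rank_of_det_ne_zero hA)

end Matrix

theorem Fintype.card_subtype_fst_ne_snd (α : Type*) [Fintype α] [DecidableEq α] :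
    Fintype.card {p : α × α // p.1 ≠ p.2} = Fintype.card α * (Fintype.card α - 1) := by
  have : Finset.univ.filter (fun p : α × α => p.1 ≠ p.2) = Finset.univ.offDiag := by
    ext; simp
  rw [Fintype.card_subtype, this, Finset.offDiag_card, Nat.mul_sub_one, Finset.card_univ]

def Dyad.edge {n : ℕ} (d : Dyad n) : {z : Sym2 (Fin n) // ¬z.IsDiag} :=
  ⟨s(d.1.1, d.1.2), Sym2.mk_isDiag_iff.not.mpr d.2⟩

def edgeOverlapMatrix (α : Type*) [Fintype α] [DecidableEq α] :
    Matrix {z : Sym2 α // ¬z.IsDiag} {z : Sym2 α // ¬z.IsDiag} ℝ :=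
  Matrix.of fun z w => if ∃ a, a ∈ z.1 ∧ a ∈ w.1 then 1 else 0

theorem overlapMatrix_eq_submatrix_edge (n : ℕ) :
    overlapMatrix n = (edgeOverlapMatrix (Fin n)).submatrix Dyad.edge Dyad.edge := by
  ext d f
  simp only [overlapMatrix, edgeOverlapMatrix, Dyad.edge, Matrix.of_apply, Matrix.submatrix_apply,
    Sym2.mem_iff]
  congr 1
  simp only [or_and_right, exists_or, exists_eq_left, or_assoc]

theorem rank_overlapMatrix_le (n : ℕ) : (overlapMatrix n).rank ≤ n.choose 2 := by
  rw [overlapMatrix_eq_submatrix_edge]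
  refine (Matrix.rank_submatrix_le _ _ _).trans ((Matrix.rank_le_card_height _).trans_eq ?_)
  rw [Sym2.card_subtype_not_diag, Fintype.card_fin]

/-- For any residual vector `e`, the dyadic clustering covariance estimate
`(e eᵀ) ∘ S` has rank at most `n(n-1)/2`; in particular it is singular. -/
theorem dyadic_clustering_estimate_singular (n : ℕ) (hn : 2 ≤ n) (e : Dyad n → ℝ) :
    (Matrix.hadamard (Matrix.vecMulVec e e) (overlapMatrix n)).rank ≤ n * (n - 1) / 2 ∧
    (Matrix.hadamard (Matrix.vecMulVec e e) (overlapMatrix n)).det = 0 := by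
  have hrank : (Matrix.vecMulVec e e ⊙ overlapMatrix n).rank ≤ n * (n - 1) / 2 :=
    (Matrix.rank_vecMulVec_hadamard_le e e _).trans
      ((rank_overlapMatrix_le n).trans_eq (Nat.choose_two_right n))
  refine ⟨hrank, Matrix.det_eq_zero_of_rank_lt (hrank.trans_lt ?_)⟩
  rw [Fintype.card_subtype_fst_ne_snd, Fintype.card_fin]
  exact Nat.div_lt_self (Nat.mul_pos (by omega) (by omega)) one_lt_two
end

section
/- In relational simple linear regression on n actors with centered covariates, the true variance of the OLS slope estimator is given exactly by V* = Var(β̂) = (Σ_d z_d²)^{-2} · Σ_{i=1}^{5} φ_i · Σ_{(d,d')∈Θ_i} z_d z_{d'}, where (φ_1,…,φ_5) = (σ², φ_a, φ_b, φ_c, φ_d). -/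
/-! Since `β̂ = S⁻¹ Σ_d z_d y_d` with `S = Σ_d z_d²`, and each `y_d` differs from `ξ_d` by a
constant, `Var β̂ = S⁻² Σ_{d,d'} z_d z_{d'} Cov(ξ_d, ξ_{d'})`. By exchangeability
`Cov(ξ_d, ξ_{d'})` is the parameter of the configuration `Θ_i` containing `(d, d')`, and it
vanishes when `d` and `d'` share no actor, by independence; grouping the double sum by
configuration gives the formula. -/

open MeasureTheory ProbabilityTheory Filter
open scoped BigOperators Topology ENNReal NNReal

/-- The ordered dyads among the first `n` actors: ordered pairs `(i,j)`, `i ≠ j`,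
with `i, j ∈ {0, …, n-1}`. -/
def dyads (n : ℕ) : Finset (ℕ × ℕ) :=
  (Finset.range n ×ˢ Finset.range n).filter fun p => p.1 ≠ p.2

/-- The five configuration sets `Θ_1, …, Θ_5` of ordered dyad pairs among the first `n`
actors: identical, reciprocal, common receiver, common sender, head-to-tail. -/
def theta (n : ℕ) : Fin 5 → Finset ((ℕ × ℕ) × (ℕ × ℕ)) :=
  ![(dyads n ×ˢ dyads n).filter fun q => q.2 = q.1,
    (dyads n ×ˢ dyads n).filter fun q => q.2.1 = q.1.2 ∧ q.2.2 = q.1.1,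
    (dyads n ×ˢ dyads n).filter fun q => q.2.2 = q.1.2 ∧ q.2.1 ≠ q.1.1 ∧ q.2.1 ≠ q.1.2,
    (dyads n ×ˢ dyads n).filter fun q => q.2.1 = q.1.1 ∧ q.2.2 ≠ q.1.2 ∧ q.2.2 ≠ q.1.1,
    (dyads n ×ˢ dyads n).filter fun q =>
      (q.2.1 = q.1.2 ∧ q.2.2 ≠ q.1.1 ∧ q.2.2 ≠ q.1.2) ∨
      (q.2.2 = q.1.1 ∧ q.2.1 ≠ q.1.1 ∧ q.2.1 ≠ q.1.2)]

/-- An exchangeable covariance structure with parameters `(σ², φa, φb, φc, φd)` on the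
family `(ξ i j)_{i ≠ j, i,j < n}` of real random variables indexed by the ordered dyads
among the first `n` actors. -/
structure ExchCovOn {Ω : Type} [MeasureSpace Ω] (n : ℕ) (ξ : ℕ → ℕ → Ω → ℝ)
    (σ2 φa φb φc φd : ℝ) : Prop where
  meas : ∀ i j, Measurable (ξ i j)
  memL2 : ∀ i j, i < n → j < n → i ≠ j → MemLp (ξ i j) 2 volume
  mean0 : ∀ i j, i < n → j < n → i ≠ j → ∫ ω, ξ i j ω = 0
  var_eq : ∀ i j, i < n → j < n → i ≠ j → cov (ξ i j) (ξ i j) = σ2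
  cov_recip : ∀ i j, i < n → j < n → i ≠ j → cov (ξ i j) (ξ j i) = φa
  cov_recv : ∀ i j k, i < n → j < n → k < n → i ≠ j → k ≠ i → k ≠ j →
    cov (ξ i j) (ξ k j) = φb
  cov_send : ∀ i j k, i < n → j < n → k < n → i ≠ j → k ≠ i → k ≠ j →
    cov (ξ i j) (ξ i k) = φc
  cov_ht1 : ∀ i j k, i < n → j < n → k < n → i ≠ j → k ≠ i → k ≠ j →
    cov (ξ i j) (ξ k i) = φd
  cov_ht2 : ∀ i j k, i < n → j < n → k < n → i ≠ j → k ≠ i → k ≠ j →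
    cov (ξ i j) (ξ j k) = φd
  indep : ∀ i j, i < n → j < n → i ≠ j →
    Indep (MeasurableSpace.comap (ξ i j) inferInstance)
      (⨆ (k : ℕ) (l : ℕ) (_ : k < n) (_ : l < n) (_ : k ≠ l)
        (_ : k ≠ i) (_ : k ≠ j) (_ : l ≠ i) (_ : l ≠ j),
        MeasurableSpace.comap (ξ k l) inferInstance) volume

lemma variance_fun_sum_const_mul {Ω ι : Type*} {mΩ : MeasurableSpace Ω} {μ : Measure Ω}
    [IsFiniteMeasure μ] {s : Finset ι} {X : ι → Ω → ℝ} (a : ι → ℝ)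
    (hX : ∀ i ∈ s, MemLp (X i) 2 μ) :
    Var[fun ω ↦ ∑ i ∈ s, a i * X i ω; μ] = ∑ i ∈ s, ∑ j ∈ s, a i * a j * cov[X i, X j; μ] := by
  rw [variance_fun_sum' fun i hi ↦ (hX i hi).const_mul (a i)]
  refine Finset.sum_congr rfl fun i _ ↦ Finset.sum_congr rfl fun j _ ↦ ?_
  rw [covariance_const_mul_left, covariance_const_mul_right, mul_assoc]

lemma cov_eq_covariance {Ω : Type} [MeasureSpace Ω] (X Y : Ω → ℝ) :
    cov X Y = cov[X, Y] := rfl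

lemma mem_dyads {n : ℕ} {d : ℕ × ℕ} : d ∈ dyads n ↔ d.1 < n ∧ d.2 < n ∧ d.1 ≠ d.2 := by
  simp [dyads, and_assoc]

lemma theta_subset (n : ℕ) (i : Fin 5) : theta n i ⊆ dyads n ×ˢ dyads n := by
  fin_cases i <;> exact Finset.filter_subset _ _

lemma sum_dyads_mul_sum_theta_indicator (n : ℕ) (φ : Fin 5 → ℝ) (w : ℕ × ℕ → ℕ × ℕ → ℝ) :
    ∑ d ∈ dyads n, ∑ d' ∈ dyads n, w d d' * ∑ i, φ i * (if (d, d') ∈ theta n i then 1 else 0) =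
      ∑ i, φ i * ∑ q ∈ theta n i, w q.1 q.2 := by
  rw [← Finset.sum_product']
  simp only [Finset.mul_sum, mul_ite, mul_one, mul_zero]
  rw [Finset.sum_comm]
  refine Finset.sum_congr rfl fun i _ ↦ ?_
  rw [Finset.sum_ite_mem, Finset.inter_eq_right.mpr (theta_subset n i)]
  exact Finset.sum_congr rfl fun q _ ↦ by ring

namespace ExchCovOn

variable {Ω : Type} [MeasureSpace Ω] {n : ℕ} {ξ : ℕ → ℕ → Ω → ℝ} {σ2 φa φb φc φd : ℝ}

lemma indepFun_of_disjoint (h : ExchCovOn n ξ σ2 φa φb φc φd) {j k l m : ℕ}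
    (hj : j < n) (hk : k < n) (hl : l < n) (hm : m < n) (hjk : j ≠ k) (hlm : l ≠ m)
    (hlj : l ≠ j) (hlk : l ≠ k) (hmj : m ≠ j) (hmk : m ≠ k) :
    IndepFun (ξ j k) (ξ l m) volume :=
  (IndepFun_iff_Indep _ _ _).mpr <| indep_of_indep_of_le_right (h.indep j k hj hk hjk) <|
    le_iSup_of_le l <| le_iSup_of_le m <| le_iSup_of_le hl <| le_iSup_of_le hm <|
      le_iSup_of_le hlm <| le_iSup_of_le hlj <| le_iSup_of_le hlk <|
      le_iSup_of_le hmj <| le_iSup_of_le hmk le_rfl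

lemma covariance_eq_sum_theta (h : ExchCovOn n ξ σ2 φa φb φc φd) {d d' : ℕ × ℕ}
    (hd : d ∈ dyads n) (hd' : d' ∈ dyads n) :
    cov[ξ d.1 d.2, ξ d'.1 d'.2] =
      ∑ i, ![σ2, φa, φb, φc, φd] i * (if (d, d') ∈ theta n i then 1 else 0) := by
  obtain ⟨j, k⟩ := d
  obtain ⟨l, m⟩ := d'
  obtain ⟨hj, hk, hjk⟩ := mem_dyads.1 hd
  obtain ⟨hl, hm, hlm⟩ := mem_dyads.1 hd'
  simp only at hj hk hjk hl hm hlm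
  simp only [Fin.sum_univ_five, theta, Matrix.cons_val, Finset.mem_filter, Finset.mem_product,
    hd, hd', true_and, Prod.ext_iff, mul_ite, mul_one, mul_zero]
  rw [← cov_eq_covariance]
  rcases eq_or_ne l j with rfl | hlj
  · rcases eq_or_ne m k with rfl | hmk
    · simp [h.var_eq _ _ hl hm hlm, hlm, hlm.symm]
    · simp [h.cov_send _ _ _ hl hk hm hjk hlm.symm hmk, hmk, hjk, hlm.symm]
  rcases eq_or_ne l k with rfl | hlk
  · rcases eq_or_ne m j with rfl | hmj
    · simp [h.cov_recip _ _ hj hl hjk, hlj]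
    · simp [h.cov_ht2 _ _ _ hj hl hm hjk hmj hlm.symm, hlj, hmj, hlm.symm]
  rcases eq_or_ne m j with rfl | hmj
  · simp [h.cov_ht1 _ _ _ hm hk hl hjk hlj hlk, hjk, hlj, hlk]
  rcases eq_or_ne m k with rfl | hmk
  · simp [h.cov_recv _ _ _ hj hm hl hjk hlj hlk, hlj, hlk, hmj]
  rw [cov_eq_covariance, (h.indepFun_of_disjoint hj hk hl hm hjk hlm hlj hlk hmj hmk
    ).covariance_eq_zero (h.memL2 _ _ hj hk hjk) (h.memL2 _ _ hl hm hlm)]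
  simp [hlj, hlk, hmj, hmk]

end ExchCovOn

theorem variance_ols_slope_exchangeable_general
    {Ω : Type} [MeasureSpace Ω] [IsProbabilityMeasure (volume : Measure Ω)]
    (n : ℕ) (z : ℕ × ℕ → ℝ) (β : ℝ) (ξ : ℕ → ℕ → Ω → ℝ)
    (σ2 φa φb φc φd : ℝ)
    (hexch : ExchCovOn n ξ σ2 φa φb φc φd)
    (y : ℕ × ℕ → Ω → ℝ) (hy : ∀ d ω, y d ω = z d * β + ξ d.1 d.2 ω)
    (bhat : Ω → ℝ)
    (hbhat : ∀ ω, bhat ω = (∑ d ∈ dyads n, z d * y d ω) / ∑ d ∈ dyads n, z d ^ 2)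
    :
    variance bhat volume =
      ((∑ d ∈ dyads n, z d ^ 2) ^ 2)⁻¹ *
        ∑ i : Fin 5, ![σ2, φa, φb, φc, φd] i * ∑ q ∈ theta n i, z q.1 * z q.2 := by
  have hξ : ∀ d ∈ dyads n, MemLp (ξ d.1 d.2) 2 volume := fun d hd ↦
    let ⟨h1, h2, h12⟩ := mem_dyads.1 hd
    hexch.memL2 _ _ h1 h2 h12
  have hy_eq : ∀ d, y d = fun ω ↦ z d * β + ξ d.1 d.2 ω := fun d ↦ funext (hy d)
  have hy_L2 : ∀ d ∈ dyads n, MemLp (y d) 2 volume := fun d hd ↦ by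
    rw [hy_eq]
    exact MemLp.add (memLp_const (z d * β)) (hξ d hd)
  have hcov_y : ∀ d ∈ dyads n, ∀ d' ∈ dyads n,
      cov[y d, y d'] = cov[ξ d.1 d.2, ξ d'.1 d'.2] := fun d hd d' hd' ↦ by
    rw [hy_eq, hy_eq, covariance_const_add_left ((hξ d hd).integrable one_le_two),
      covariance_const_add_right ((hξ d' hd').integrable one_le_two)]
  have hbhat_eq : bhat = fun ω ↦ (∑ d ∈ dyads n, z d ^ 2)⁻¹ * ∑ d ∈ dyads n, z d * y d ω :=
    funext fun ω ↦ by rw [hbhat, div_eq_inv_mul]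
  rw [hbhat_eq, variance_const_mul, variance_fun_sum_const_mul z hy_L2, inv_pow,
    ← sum_dyads_mul_sum_theta_indicator n _ fun d d' ↦ z d * z d']
  congr 1
  refine Finset.sum_congr rfl fun d hd ↦ Finset.sum_congr rfl fun d' hd' ↦ ?_
  rw [hcov_y d hd d' hd', hexch.covariance_eq_sum_theta hd hd']

/-- In relational simple linear regression with centered covariates and exchangeable
errors, the true variance of the OLS slope estimator is
`V* = (Σ z²)⁻² Σ_{i=1}^5 φ_i Σ_{(d,d′)∈Θ_i} z_d z_{d′}`. -/
theorem variance_ols_slope_exchangeable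
    {Ω : Type} [MeasureSpace Ω] [IsProbabilityMeasure (volume : Measure Ω)]
    (n : ℕ) (z : ℕ × ℕ → ℝ) (β : ℝ) (ξ : ℕ → ℕ → Ω → ℝ)
    (σ2 φa φb φc φd : ℝ)
    (hexch : ExchCovOn n ξ σ2 φa φb φc φd)
    (hz0 : ∑ d ∈ dyads n, z d = 0) (hz2 : 0 < ∑ d ∈ dyads n, z d ^ 2)
    (y : ℕ × ℕ → Ω → ℝ) (hy : ∀ d ω, y d ω = z d * β + ξ d.1 d.2 ω)
    (bhat : Ω → ℝ)
    (hbhat : ∀ ω, bhat ω = (∑ d ∈ dyads n, z d * y d ω) / ∑ d ∈ dyads n, z d ^ 2)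
    :
    variance bhat volume =
      ((∑ d ∈ dyads n, z d ^ 2) ^ 2)⁻¹ *
        ∑ i : Fin 5, ![σ2, φa, φb, φc, φd] i * ∑ q ∈ theta n i, z q.1 * z q.2 :=
  variance_ols_slope_exchangeable_general n z β ξ σ2 φa φb φc φd hexch y hy bhat hbhat
end
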